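/- Let ℓ > 0, c ∈ [0,1), Y = (2π/ℓ)arcsin(c), and ρ_ℓ(s) = (ℓ/(2π))(cos((ℓ/(2π))s))^{-1}. For any w ∈ C^1([0,Y] × S^1, ℝ), c · ρ_ℓ(Y) ∫_{S^1} |w(Y,θ)| dθ ≤ ∫_0^Y ∫_{S^1} |w| ρ_ℓ(s)² dθ ds + c ∫_0^Y ∫_{S^1} |∂_s w| ρ_ℓ(s) dθ ds. -/

import Mathlib

open Real MeasureTheory intervalIntegral

/-- The conformal factor of the hyperbolic collar metric around a geodesic of length `ℓ`. -/
noncomputable def collarRho (ℓ s : ℝ) : ℝ := ℓ / (2 * π) * (Real.cos (ℓ / (2 * π) * s))⁻¹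

/-!
Put `U(s) = ∫ |w(s,θ)| dθ` and `V(s) = ∫ |∂ₛw(s,θ)| dθ`. The fundamental theorem of calculus in
`s`, integrated over `θ`, gives `U(Y) ≤ U(s) + ∫ₛ^Y V` for `s ∈ [0,Y]`. Multiply by `ρ(s)²` and
integrate over `[0,Y]`. The primitive of `ρ²` vanishing at `0` is `G(s) = ρ(s) sin(ℓs/2π)`, so
the left side becomes `G(Y) U(Y) = c ρ(Y) U(Y)`, and integration by parts turns the double
integral of `V` into `∫ G V ≤ c ∫ ρ V`.
-/

open Set Function

section PartialDerivative

variable {f : ℝ → ℝ → ℝ}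

lemma differentiable_uncurry_left (hf : Differentiable ℝ (uncurry f)) (θ : ℝ) :
    Differentiable ℝ (fun t => f t θ) :=
  hf.comp (differentiable_id.prodMk (differentiable_const θ))

lemma continuous_uncurry_deriv_left (hf : ContDiff ℝ 1 (uncurry f)) :
    Continuous (uncurry fun s θ => deriv (fun t => f t θ) s) := by
  have hderiv : (uncurry fun s θ => deriv (fun t => f t θ) s) =
      fun p => fderiv ℝ (uncurry f) p (1, 0) := by
    funext p
    have h := ((hf.differentiable one_ne_zero) p).hasFDerivAt.comp_hasDerivAt p.1
      ((hasDerivAt_id p.1).prodMk (hasDerivAt_const p.1 p.2))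
    exact h.deriv
  rw [hderiv]
  exact (hf.continuous_fderiv one_ne_zero).clm_apply continuous_const

end PartialDerivative

lemma abs_le_abs_add_integral_abs_deriv {u u' : ℝ → ℝ} {a b : ℝ} (hab : a ≤ b)
    (hu : ∀ x ∈ uIcc a b, HasDerivAt u (u' x) x) (hu' : IntervalIntegrable u' volume a b) :
    |u b| ≤ |u a| + ∫ x in a..b, |u' x| := by
  have hftc : u b = u a + ∫ x in a..b, u' x := by
    rw [integral_eq_sub_of_hasDerivAt hu hu']; ring
  calc |u b| ≤ |u a| + |∫ x in a..b, u' x| := hftc ▸ abs_add_le _ _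
    _ ≤ |u a| + ∫ x in a..b, |u' x| := by gcongr; exact abs_integral_le_integral_abs hab

lemma intervalIntegral_intervalIntegral_swap_of_continuous {F : ℝ → ℝ → ℝ}
    (hF : Continuous (uncurry F)) (a b c d : ℝ) :
    ∫ x in a..b, ∫ y in c..d, F x y = ∫ y in c..d, ∫ x in a..b, F x y :=
  intervalIntegral_intervalIntegral_swap
    ((hF.continuousOn.integrableOn_compact (isCompact_uIcc.prod isCompact_uIcc)).mono_set
      (prod_mono uIoc_subset_uIcc uIoc_subset_uIcc))

lemma integral_abs_le_integral_abs_add_integral_abs_deriv {f : ℝ → ℝ → ℝ}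
    (hf : ContDiff ℝ 1 (uncurry f)) {a b c d : ℝ} (hab : a ≤ b) (hcd : c ≤ d) :
    ∫ θ in c..d, |f b θ| ≤
      (∫ θ in c..d, |f a θ|) + ∫ t in a..b, ∫ θ in c..d, |deriv (fun t => f t θ) t| := by
  set D := fun s θ => deriv (fun t => f t θ) s
  have hDc : Continuous (uncurry fun t θ => |D t θ|) := (continuous_uncurry_deriv_left hf).abs
  have hpointwise (θ : ℝ) : |f b θ| ≤ |f a θ| + ∫ t in a..b, |D t θ| :=
    abs_le_abs_add_integral_abs_deriv hab
      (fun t _ => (differentiable_uncurry_left (hf.differentiable one_ne_zero) θ t).hasDerivAt)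
      ((continuous_uncurry_deriv_left hf).comp (continuous_id.prodMk continuous_const)
        |>.intervalIntegrable a b)
  have hslice (x : ℝ) : Continuous fun θ => |f x θ| :=
    (hf.continuous.comp (continuous_const.prodMk continuous_id)).abs
  have hparam : Continuous fun θ => ∫ t in a..b, |D t θ| :=
    continuous_parametric_intervalIntegral_of_continuous' (f := fun θ t => |D t θ|)
      (hDc.comp continuous_swap) a b
  rw [intervalIntegral_intervalIntegral_swap_of_continuous hDc,
    ← integral_add ((hslice a).intervalIntegrable c d) (hparam.intervalIntegrable c d)]
  exact integral_mono_on hcd ((hslice b).intervalIntegrable c d)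
    (((hslice a).add hparam).intervalIntegrable c d) fun θ _ => hpointwise θ

lemma mul_le_integral_of_le_add_integral {g G U V : ℝ → ℝ} {a b : ℝ} (hab : a ≤ b)
    (hG : ∀ s ∈ Icc a b, HasDerivAt G (g s) s) (hGa : G a = 0)
    (hg : ContinuousOn g (Icc a b)) (hg0 : ∀ s ∈ Icc a b, 0 ≤ g s)
    (hU : IntervalIntegrable U volume a b) (hV : Continuous V)
    (hUV : ∀ s ∈ Icc a b, U b ≤ U s + ∫ t in s..b, V t) :
    G b * U b ≤ (∫ s in a..b, U s * g s) + ∫ s in a..b, G s * V s := by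
  rw [← uIcc_of_le hab] at hG hg
  set H := fun s => ∫ t in s..b, V t
  have hH (s : ℝ) : HasDerivAt H (-V s) s :=
    integral_hasDerivAt_left (hV.intervalIntegrable _ _)
      hV.aestronglyMeasurable.stronglyMeasurableAtFilter hV.continuousAt
  have hHc : Continuous H := continuous_iff_continuousAt.2 fun s => (hH s).continuousAt
  have hgi : IntervalIntegrable g volume a b := hg.intervalIntegrable
  have hIBP : ∫ s in a..b, H s * g s = ∫ s in a..b, G s * V s := by
    have hparts := integral_mul_deriv_eq_deriv_mul (fun s _ => hH s) hG
      (hV.neg.intervalIntegrable _ _) hgi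
    simpa [H, hGa, mul_comm] using hparts
  calc G b * U b = ∫ s in a..b, g s * U b := by
        rw [intervalIntegral.integral_mul_const, integral_eq_sub_of_hasDerivAt hG hgi, hGa,
          sub_zero]
    _ ≤ ∫ s in a..b, (U s * g s + H s * g s) :=
        integral_mono_on hab (hgi.mul_const _)
          ((hU.mul_continuousOn hg).add ((hHc.intervalIntegrable a b).mul_continuousOn hg))
          fun s hs => by nlinarith [hUV s hs, hg0 s hs]
    _ = (∫ s in a..b, U s * g s) + ∫ s in a..b, G s * V s := by
        rw [integral_add (hU.mul_continuousOn hg)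
          ((hHc.intervalIntegrable a b).mul_continuousOn hg), hIBP]

section Collar

variable {ℓ c Y : ℝ}

lemma continuousOn_collarRho : ContinuousOn (collarRho ℓ) {s | cos (ℓ / (2 * π) * s) ≠ 0} :=
  continuousOn_const.mul ((continuous_cos.comp (continuous_const_mul _)).continuousOn.inv₀
    fun _ hs => hs)

lemma hasDerivAt_collarRho_mul_sin {s : ℝ} (hs : cos (ℓ / (2 * π) * s) ≠ 0) :
    HasDerivAt (fun s => collarRho ℓ s * sin (ℓ / (2 * π) * s)) (collarRho ℓ s ^ 2) s := by
  set k := ℓ / (2 * π)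
  have htan : (fun s => collarRho ℓ s * sin (k * s)) = fun s => k * tan (k * s) := by
    funext s
    rw [collarRho, tan_eq_sin_div_cos]
    ring
  rw [htan]
  refine (((hasDerivAt_tan hs).comp s ((hasDerivAt_id s).const_mul k)).const_mul k).congr_deriv ?_
  simp only [collarRho, k]
  field_simp

lemma collar_angle_eq_arcsin (hℓ : ℓ ≠ 0) (hY : Y = 2 * π / ℓ * arcsin c) :
    ℓ / (2 * π) * Y = arcsin c := by
  rw [hY]; field_simp

lemma collar_angle_mem_Icc (hℓ : 0 < ℓ) (hY : Y = 2 * π / ℓ * arcsin c) {s : ℝ}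
    (hs : s ∈ Icc 0 Y) : ℓ / (2 * π) * s ∈ Icc 0 (arcsin c) :=
  ⟨by have := hs.1; positivity,
    collar_angle_eq_arcsin hℓ.ne' hY ▸ mul_le_mul_of_nonneg_left hs.2 (by positivity)⟩

lemma collar_trace_bound_of_le_add_integral (hℓ : 0 < ℓ) (hc0 : 0 ≤ c) (hc1 : c < 1)
    (hY : Y = 2 * π / ℓ * arcsin c)
    {U V : ℝ → ℝ} (hU : IntervalIntegrable U volume 0 Y) (hV : Continuous V)
    (hV0 : ∀ s ∈ Icc 0 Y, 0 ≤ V s) (hUV : ∀ s ∈ Icc 0 Y, U Y ≤ U s + ∫ t in s..Y, V t) :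
    c * collarRho ℓ Y * U Y ≤
      (∫ s in (0:ℝ)..Y, U s * collarRho ℓ s ^ 2) + c * ∫ s in (0:ℝ)..Y, V s * collarRho ℓ s := by
  set k := ℓ / (2 * π)
  have hY0 : 0 ≤ Y := hY ▸ mul_nonneg (by positivity) (arcsin_nonneg.2 hc0)
  have hcos (s : ℝ) (hs : s ∈ Icc 0 Y) : 0 < cos (k * s) := by
    obtain ⟨h0, hle⟩ := collar_angle_mem_Icc hℓ hY hs
    exact cos_pos_of_mem_Ioo ⟨by linarith [pi_pos], hle.trans_lt (arcsin_lt_pi_div_two.2 hc1)⟩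
  have hsin (s : ℝ) (hs : s ∈ Icc 0 Y) : sin (k * s) ≤ c := by
    obtain ⟨h0, hle⟩ := collar_angle_mem_Icc hℓ hY hs
    exact (le_arcsin_iff_sin_le' ⟨by linarith [pi_pos], hle.trans (arcsin_le_pi_div_two c)⟩).1 hle
  have hρc : ContinuousOn (collarRho ℓ) (uIcc 0 Y) :=
    continuousOn_collarRho.mono fun s hs => (hcos s (uIcc_of_le hY0 ▸ hs)).ne'
  have hρ0 (s : ℝ) (hs : s ∈ Icc 0 Y) : 0 ≤ collarRho ℓ s := by
    have := hcos s hs; unfold collarRho; positivity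
  have hsinY : sin (k * Y) = c := by
    rw [collar_angle_eq_arcsin hℓ.ne' hY, sin_arcsin (by linarith) hc1.le]
  have hbound := mul_le_integral_of_le_add_integral hY0
    (fun s hs => hasDerivAt_collarRho_mul_sin (hcos s hs).ne') (by simp)
    (uIcc_of_le hY0 ▸ hρc.pow 2) (fun _ _ => sq_nonneg _) hU hV hUV
  rw [hsinY] at hbound
  calc c * collarRho ℓ Y * U Y = collarRho ℓ Y * c * U Y := by ring
    _ ≤ (∫ s in (0:ℝ)..Y, U s * collarRho ℓ s ^ 2) +
          ∫ s in (0:ℝ)..Y, collarRho ℓ s * sin (k * s) * V s := hbound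
    _ ≤ (∫ s in (0:ℝ)..Y, U s * collarRho ℓ s ^ 2) + c * ∫ s in (0:ℝ)..Y, V s * collarRho ℓ s := by
        rw [← intervalIntegral.integral_const_mul]
        gcongr
        refine integral_mono_on hY0 ?_ ?_ fun s hs => ?_
        · exact ((hρc.mul (continuous_sin.comp (continuous_const_mul k)).continuousOn).mul
            hV.continuousOn).intervalIntegrable
        · exact (continuousOn_const.mul (hV.continuousOn.mul hρc)).intervalIntegrable
        · nlinarith [mul_nonneg (sub_nonneg.2 (hsin s hs)) (mul_nonneg (hρ0 s hs) (hV0 s hs))]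

end Collar

theorem half_collar_trace_estimate_general
    (ℓ c : ℝ) (hℓ : 0 < ℓ) (hc0 : 0 ≤ c) (hc1 : c < 1)
    (Y : ℝ) (hY : Y = 2 * π / ℓ * Real.arcsin c)
    (w : ℝ → ℝ → ℝ) (hw : ContDiff ℝ 1 (Function.uncurry w)) :
    c * collarRho ℓ Y * ∫ θ in (0:ℝ)..(2 * π), |w Y θ|
      ≤ (∫ s in (0:ℝ)..Y, ∫ θ in (0:ℝ)..(2 * π), |w s θ| * (collarRho ℓ s) ^ 2)
        + c * ∫ s in (0:ℝ)..Y, ∫ θ in (0:ℝ)..(2 * π),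
            |deriv (fun t => w t θ) s| * collarRho ℓ s := by
  have h2π : (0:ℝ) ≤ 2 * π := by positivity
  have hU : Continuous fun s => ∫ θ in (0:ℝ)..(2 * π), |w s θ| :=
    continuous_parametric_intervalIntegral_of_continuous' hw.continuous.abs _ _
  have hV : Continuous fun s => ∫ θ in (0:ℝ)..(2 * π), |deriv (fun t => w t θ) s| :=
    continuous_parametric_intervalIntegral_of_continuous' (continuous_uncurry_deriv_left hw).abs _ _
  have hbound := collar_trace_bound_of_le_add_integral hℓ hc0 hc1 hY (hU.intervalIntegrable 0 Y) hV
    (fun _ _ => integral_nonneg h2π fun _ _ => abs_nonneg _)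
    (fun _ hs => integral_abs_le_integral_abs_add_integral_abs_deriv hw hs.2 h2π)
  simpa only [intervalIntegral.integral_mul_const] using hbound

/-- half-collar trace estimate in collar coordinates: for the metric
`ρ_ℓ(s)²(ds²+dθ²)` on `[0,Y] × S¹`, `Y = (2π/ℓ) arcsin c`, and any `C¹` function `w`,
`c ρ_ℓ(Y) ∫_{S¹} |w(Y,θ)| dθ ≤ ∫∫ |w| ρ_ℓ² + c ∫∫ |∂_s w| ρ_ℓ`. -/
theorem half_collar_trace_estimate
    (ℓ c : ℝ) (hℓ : 0 < ℓ) (hc0 : 0 ≤ c) (hc1 : c < 1)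
    (Y : ℝ) (hY : Y = 2 * π / ℓ * Real.arcsin c)
    (w : ℝ → ℝ → ℝ) (hw : ContDiff ℝ 1 (Function.uncurry w))
    (hper : ∀ s θ, w s (θ + 2 * π) = w s θ) :
    c * collarRho ℓ Y * ∫ θ in (0:ℝ)..(2 * π), |w Y θ|
      ≤ (∫ s in (0:ℝ)..Y, ∫ θ in (0:ℝ)..(2 * π), |w s θ| * (collarRho ℓ s) ^ 2)
        + c * ∫ s in (0:ℝ)..Y, ∫ θ in (0:ℝ)..(2 * π),
            |deriv (fun t => w t θ) s| * collarRho ℓ s :=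
  half_collar_trace_estimate_general ℓ c hℓ hc0 hc1 Y hY w hw
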